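/- For a finite poset P, the dilated chain polytope C(P,r) is the convex hull of the points r·χ_a where a ranges over antichains of P together with all sums χ_{a_1} + ⋯ + χ_{a_r} of r characteristic functions of antichains; equivalently, C(P,r) is the r-fold Minkowski sum of C(P,1) with itself. -/

import Mathlib

/-- The dilated order polytope `O(P,r)`. -/
def orderPolytope (P : Type*) [PartialOrder P] (r : ℝ) : Set (P → ℝ) :=
  {x | (∀ p, 0 ≤ x p ∧ x p ≤ r) ∧ ∀ p q : P, p ≤ q → x p ≤ x q}

/-- The dilated chain polytope `C(P,r)`. -/
def chainPolytope (P : Type*) [PartialOrder P] (r : ℝ) : Set (P → ℝ) :=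
  {x | (∀ p, 0 ≤ x p) ∧
    ∀ C : Finset P, IsChain (· ≤ ·) (C : Set P) → ∑ p ∈ C, x p ≤ r}

/-- `x` is a lattice (integral) point. -/
def isLatticePoint {P : Type*} (x : P → ℝ) : Prop := ∀ p, ∃ m : ℤ, x p = m

/-- Characteristic function of a finite subset. -/
def chi {P : Type*} [DecidableEq P] (A : Finset P) : P → ℝ :=
  fun p => if p ∈ A then 1 else 0

/-!
A point `x ≠ 0` of `C(P,s)` is peeled greedily: let `M` be the antichain of maximal elements of
the support of `x` and `t` the least value of `x` on `M`. Then `x - t • χ_M` lies in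
`C(P, s - t)`, because a chain avoiding `M` can be extended, above its part in the support, by an
element of `M`, where `x ≥ t`. The support strictly shrinks, so induction gives
`C(P,s) = s • conv {χ_a}`, and both descriptions of `C(P,r)` follow from
`r • conv {χ_a} = conv {r • χ_a}` and `r • y = y + ⋯ + y`.
-/

open Finset Function Pointwise

lemma IsChain.exists_maximal_insert {α : Type*} [PartialOrder α] {S D : Set α} (hS : S.Finite)
    (hne : S.Nonempty) (hD : IsChain (· ≤ ·) D) (hDS : D ⊆ S) :
    ∃ b, Maximal (· ∈ S) b ∧ IsChain (· ≤ ·) (insert b D) := by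
  obtain ⟨m, hmS, hmD⟩ : ∃ m ∈ S, ∀ d ∈ D, d ≤ m := by
    rcases D.eq_empty_or_nonempty with rfl | hDne
    · obtain ⟨m, hm⟩ := hne
      exact ⟨m, hm, by simp⟩
    · obtain ⟨m, hm⟩ := (hS.subset hDS).exists_maximal hDne
      exact ⟨m, hDS hm.prop, fun d hd => (hD.total hm.prop hd).elim (hm.le_of_ge hd) id⟩
  obtain ⟨b, hmb, hb⟩ := hS.exists_le_maximal hmS
  exact ⟨b, hb, hD.insert fun d hd _ => Or.inr ((hmD d hd).trans hmb)⟩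

section ChainPolytope

variable {P : Type*} [PartialOrder P]

lemma nonneg_of_mem_chainPolytope {r : ℝ} {x : P → ℝ} (hx : x ∈ chainPolytope P r) : 0 ≤ r := by
  simpa using hx.2 ∅ (by simp)

lemma add_mem_chainPolytope {r s : ℝ} {x y : P → ℝ} (hx : x ∈ chainPolytope P r)
    (hy : y ∈ chainPolytope P s) : x + y ∈ chainPolytope P (r + s) :=
  ⟨fun p => add_nonneg (hx.1 p) (hy.1 p), fun C hC => by
    simpa only [Pi.add_apply, sum_add_distrib] using add_le_add (hx.2 C hC) (hy.2 C hC)⟩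

lemma smul_mem_chainPolytope {c r : ℝ} (hc : 0 ≤ c) {x : P → ℝ} (hx : x ∈ chainPolytope P r) :
    c • x ∈ chainPolytope P (c * r) :=
  ⟨fun p => mul_nonneg hc (hx.1 p), fun C hC => by
    simpa only [Pi.smul_apply, smul_eq_mul, ← mul_sum] using
      mul_le_mul_of_nonneg_left (hx.2 C hC) hc⟩

lemma sum_mem_chainPolytope {ι : Type*} (s : Finset ι) {f : ι → P → ℝ} {r : ι → ℝ}
    (h : ∀ i ∈ s, f i ∈ chainPolytope P (r i)) :
    ∑ i ∈ s, f i ∈ chainPolytope P (∑ i ∈ s, r i) := by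
  classical
  induction s using Finset.induction_on with
  | empty => exact ⟨fun _ => le_rfl, fun _ _ => by simp⟩
  | insert i s hi ih =>
    rw [sum_insert hi, sum_insert hi]
    exact add_mem_chainPolytope (h i (mem_insert_self i s))
      (ih fun j hj => h j (mem_insert_of_mem hj))

lemma convex_chainPolytope (r : ℝ) : Convex ℝ (chainPolytope P r) := by
  intro x hx y hy a b ha hb hab
  simpa [← add_mul, hab] using
    add_mem_chainPolytope (smul_mem_chainPolytope ha hx) (smul_mem_chainPolytope hb hy)

variable [DecidableEq P]

lemma chi_mem_chainPolytope {A : Finset P} (hA : IsAntichain (· ≤ ·) (A : Set P)) :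
    chi A ∈ chainPolytope P 1 := by
  refine ⟨fun p => by unfold chi; split_ifs <;> norm_num, fun C hC => ?_⟩
  have h := inter_subsingleton_of_isChain_of_isAntichain hC hA
  rw [← coe_inter, ← card_le_one_iff_subsingleton] at h
  simp only [chi, sum_boole, filter_mem_eq_inter]
  exact_mod_cast h

variable (P) in
def antichainChis : Set (P → ℝ) := chi '' {A : Finset P | IsAntichain (· ≤ ·) (A : Set P)}

lemma convexHull_antichainChis_subset : convexHull ℝ (antichainChis P) ⊆ chainPolytope P 1 :=
  convexHull_min (by rintro _ ⟨A, hA, rfl⟩; exact chi_mem_chainPolytope hA)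
    (convex_chainPolytope 1)

end ChainPolytope

section Finite

variable {P : Type*} [PartialOrder P] [Fintype P]

noncomputable def supportMaximals (x : P → ℝ) : Finset P := by
  classical exact univ.filter (Maximal (x · ≠ 0))

lemma mem_supportMaximals {x : P → ℝ} {p : P} :
    p ∈ supportMaximals x ↔ Maximal (x · ≠ 0) p := by
  simp [supportMaximals]

lemma isAntichain_supportMaximals (x : P → ℝ) :
    IsAntichain (· ≤ ·) (supportMaximals x : Set P) :=
  (setOfPred_maximal_antichain _).subset fun _ hp => mem_supportMaximals.1 hp

lemma supportMaximals_nonempty {x : P → ℝ} (hx : x ≠ 0) : (supportMaximals x).Nonempty := by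
  obtain ⟨p, hp⟩ := Function.ne_iff.1 hx
  obtain ⟨b, -, hb⟩ := Finite.exists_le_maximal (p := (x · ≠ 0)) hp
  exact ⟨b, mem_supportMaximals.2 hb⟩

variable [DecidableEq P]

lemma sub_smul_chi_supportMaximals_mem_chainPolytope {s t : ℝ} {x : P → ℝ}
    (hx : x ∈ chainPolytope P s) (hx0 : x ≠ 0) (ht : 0 ≤ t)
    (htM : ∀ a ∈ supportMaximals x, t ≤ x a) :
    x - t • chi (supportMaximals x) ∈ chainPolytope P (s - t) := by
  set M := supportMaximals x
  refine ⟨fun p => ?_, fun C hC => ?_⟩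
  · by_cases hp : p ∈ M <;> simp [chi, hp, htM p, hx.1 p]
  have hsum : ∑ p ∈ C, (x - t • chi M) p = ∑ p ∈ C, x p - t * #(C ∩ M) := by
    simp [chi, sum_sub_distrib, mul_comm]
  rw [hsum]
  rcases (C ∩ M).eq_empty_or_nonempty with hCM | hCM
  · obtain ⟨b, hb, hchain⟩ := IsChain.exists_maximal_insert (S := {p | x p ≠ 0})
      (D := ↑(C.filter (x · ≠ 0))) (Set.toFinite _)
      (Function.ne_iff.1 hx0) (hC.mono (coe_subset.2 (filter_subset _ C)))
      (fun p hp => (mem_filter.1 hp).2)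
    have hbM : b ∈ M := mem_supportMaximals.2 hb
    have hbC : b ∉ C.filter (x · ≠ 0) := fun h =>
      (eq_empty_iff_forall_notMem.1 hCM) b (mem_inter.2 ⟨(mem_filter.1 h).1, hbM⟩)
    have h := hx.2 _ (by rwa [coe_insert])
    rw [sum_insert hbC, sum_filter_ne_zero] at h
    rw [hCM, card_empty, Nat.cast_zero, mul_zero, sub_zero]
    linarith [htM b hbM]
  · have h1 : (1 : ℝ) ≤ #(C ∩ M) := by exact_mod_cast hCM.card_pos
    nlinarith [hx.2 C hC]

lemma support_sub_smul_chi_supportMaximals_ssubset {x : P → ℝ} {a : P}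
    (ha : a ∈ supportMaximals x) :
    support (x - x a • chi (supportMaximals x)) ⊂ support x := by
  have hM : ∀ {p}, p ∈ supportMaximals x → x p ≠ 0 := fun hp => (mem_supportMaximals.1 hp).prop
  refine Set.ssubset_iff_exists.2
    ⟨support_subset_iff'.2 fun p hp => ?_, a, hM ha, by simp [chi, ha]⟩
  have hpM : p ∉ supportMaximals x := fun h => hp (hM h)
  simp_all [chi]

theorem chainPolytope_subset_smul_convexHull (s : ℝ) :
    chainPolytope P s ⊆ s • convexHull ℝ (antichainChis P) := by
  intro x hx
  induction hn : (support x).ncard using Nat.strong_induction_on generalizing s x with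
  | _ n ih =>
  rcases eq_or_ne x 0 with rfl | hx0
  · exact ⟨chi ∅, subset_convexHull ℝ _ ⟨∅, by simp, rfl⟩, by ext; simp [chi]⟩
  set M := supportMaximals x
  obtain ⟨a, haM, hmin⟩ := M.exists_min_image x (supportMaximals_nonempty hx0)
  have hrest := sub_smul_chi_supportMaximals_mem_chainPolytope hx hx0 (hx.1 a) hmin
  have hrest_hull := ih _ (hn ▸ Set.ncard_lt_ncard
    (support_sub_smul_chi_supportMaximals_ssubset haM)) _ hrest rfl
  have hM_hull : x a • chi M ∈ x a • convexHull ℝ (antichainChis P) :=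
    Set.smul_mem_smul_set (subset_convexHull ℝ _ ⟨M, isAntichain_supportMaximals x, rfl⟩)
  have h := Set.add_mem_add hM_hull hrest_hull
  rwa [← (convex_convexHull ℝ _).add_smul (hx.1 a) (nonneg_of_mem_chainPolytope hrest),
    add_sub_cancel, add_sub_cancel] at h

theorem chainPolytope_eq_smul_convexHull {s : ℝ} (hs : 0 ≤ s) :
    chainPolytope P s = s • convexHull ℝ (antichainChis P) := by
  refine (chainPolytope_subset_smul_convexHull s).antisymm ?_
  rintro _ ⟨y, hy, rfl⟩
  simpa using smul_mem_chainPolytope hs (convexHull_antichainChis_subset hy)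

end Finite

theorem chain_polytope_dilate_convex_hull_general (P : Type*) [PartialOrder P] [Fintype P]
    [DecidableEq P] (r : ℕ) :
    chainPolytope P (r : ℝ)
      = convexHull ℝ {x | ∃ f : Fin r → Finset P,
          (∀ i, IsAntichain (· ≤ ·) ((f i : Set P))) ∧ x = ∑ i, chi (f i)} ∧
    chainPolytope P (r : ℝ)
      = {x | ∃ f : Fin r → (P → ℝ),
          (∀ i, f i ∈ chainPolytope P 1) ∧ x = ∑ i, f i} := by
  have hsum : {x | ∃ f : Fin r → (P → ℝ), (∀ i, f i ∈ chainPolytope P 1) ∧ x = ∑ i, f i}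
      ⊆ chainPolytope P r := by
    rintro _ ⟨f, hf, rfl⟩
    simpa using sum_mem_chainPolytope univ fun i _ => hf i
  have hminkowski : chainPolytope P r
      = {x | ∃ f : Fin r → (P → ℝ), (∀ i, f i ∈ chainPolytope P 1) ∧ x = ∑ i, f i} := by
    refine Set.Subset.antisymm ?_ hsum
    rw [chainPolytope_eq_smul_convexHull r.cast_nonneg]
    rintro _ ⟨y, hy, rfl⟩
    exact ⟨fun _ => y, fun _ => convexHull_antichainChis_subset hy,
      by rw [sum_const, card_fin]; exact Nat.cast_smul_eq_nsmul ℝ r _⟩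
  refine ⟨Set.Subset.antisymm ?_ (convexHull_min ?_ (convex_chainPolytope _)), hminkowski⟩
  · rw [chainPolytope_eq_smul_convexHull r.cast_nonneg, ← convexHull_smul]
    refine convexHull_mono ?_
    rintro _ ⟨_, ⟨A, hA, rfl⟩, rfl⟩
    exact ⟨fun _ => A, fun _ => hA,
      by rw [sum_const, card_fin]; exact Nat.cast_smul_eq_nsmul ℝ r _⟩
  · rintro _ ⟨f, hf, rfl⟩
    exact hsum ⟨fun i => chi (f i), fun i => chi_mem_chainPolytope (hf i), rfl⟩

/-- `C(P,r)` is the convex hull of all sums of `r` characteristic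
functions of antichains (including the points `r • χ_a`), and equals the `r`-fold
Minkowski sum of `C(P,1)` with itself. -/
theorem chain_polytope_dilate_convex_hull (P : Type*) [PartialOrder P] [Fintype P]
    [DecidableEq P] (r : ℕ) (hr : 0 < r) :
    chainPolytope P (r : ℝ)
      = convexHull ℝ {x | ∃ f : Fin r → Finset P,
          (∀ i, IsAntichain (· ≤ ·) ((f i : Set P))) ∧ x = ∑ i, chi (f i)} ∧
    chainPolytope P (r : ℝ)
      = {x | ∃ f : Fin r → (P → ℝ),
          (∀ i, f i ∈ chainPolytope P 1) ∧ x = ∑ i, f i} :=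
  chain_polytope_dilate_convex_hull_general P r
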